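/- arXiv:2102.00937 — 7 statements merged into one kernel-verified Lean document; each statement's English description precedes it below -/
import Mathlib

section
/- Let U, X, Y be subspaces (of the same dimension r) of ℝ^m and let φ < π/4. Suppose every unit vector x ∈ X and unit vector u ∈ U satisfy |⟨x,u⟩| ≥ cos(φ), and similarly for Y and U. If x ∈ X and y ∈ Y are unit vectors with ⟨x, y⟩ ≥ 0, then for every unit vector u ∈ U, the products ⟨u,x⟩ and ⟨u,y⟩ have the same (strict) sign: ⟨u,x⟩·⟨u,y⟩ > 0. -/
open RealInnerProductSpace


private lemma same_sign_aux (a b c s : ℝ) (hc2 : (1:ℝ)/2 < c^2) (hc0 : 0 ≤ c)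
    (hca : c ≤ |a|) (hcb : c ≤ |b|) (hs : 0 ≤ s)
    (hcs : (s - a*b) * (s - a*b) ≤ (1 - a^2) * (1 - b^2))
    (hna : 0 ≤ 1 - a^2) (hnb : 0 ≤ 1 - b^2) (h : a * b ≤ 0) : False := by
  have hab : a * b ≤ -(c^2) := by
    have h1 : c * c ≤ |a| * |b| := mul_le_mul hca hcb hc0 (abs_nonneg a)
    rw [← abs_mul] at h1
    have h2 : |a * b| = -(a * b) := abs_of_nonpos h
    nlinarith
  have hac : c^2 ≤ a^2 := by nlinarith [sq_abs a]
  have hbc : c^2 ≤ b^2 := by nlinarith [sq_abs b]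
  have h1 : c^2 ≤ s - a * b := by linarith
  have h2 : (c^2)^2 ≤ (s - a * b) * (s - a * b) := by nlinarith
  have h3 : (1 - a^2) * (1 - b^2) ≤ (1 - c^2) * (1 - c^2) := by nlinarith
  nlinarith

/-- if all principal angles of the `r`-dimensional subspaces `X` and `Y` to
`U` are at most `φ < π/4` (variational characterization: every pair of unit vectors has
inner product at least `cos φ` in absolute value), and `x ∈ X`, `y ∈ Y` are unit vectors
with `⟨x,y⟩ ≥ 0`, then for every unit `u ∈ U` the inner products `⟨u,x⟩` and `⟨u,y⟩`
have the same strict sign. -/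
theorem same_sign_claim {m r : ℕ}
    (U X Y : Submodule ℝ (EuclideanSpace ℝ (Fin m)))
    (hU : Module.finrank ℝ U = r) (hX : Module.finrank ℝ X = r)
    (hYdim : Module.finrank ℝ Y = r)
    (φ : ℝ) (hφ0 : 0 ≤ φ) (hφ : φ < Real.pi / 4)
    (hXU : ∀ x ∈ X, ∀ u ∈ U, ‖x‖ = 1 → ‖u‖ = 1 → Real.cos φ ≤ |⟪x, u⟫|)
    (hYU : ∀ y ∈ Y, ∀ u ∈ U, ‖y‖ = 1 → ‖u‖ = 1 → Real.cos φ ≤ |⟪y, u⟫|)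
    (x y : EuclideanSpace ℝ (Fin m)) (hx : x ∈ X) (hy : y ∈ Y)
    (hxn : ‖x‖ = 1) (hyn : ‖y‖ = 1) (hxy : 0 ≤ ⟪x, y⟫) :
    ∀ u ∈ U, ‖u‖ = 1 → 0 < ⟪u, x⟫ * ⟪u, y⟫ := by
  intro u hu hun
  set c := Real.cos φ with hc
  set a := ⟪u, x⟫ with ha'
  set b := ⟪u, y⟫ with hb'
  -- c > √2/2
  have hcgt : Real.sqrt 2 / 2 < c := by
    have h1 : Real.cos (Real.pi / 4) < Real.cos φ := by
      apply Real.cos_lt_cos_of_nonneg_of_le_pi hφ0 _ hφ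
      linarith [Real.pi_pos]
    rwa [Real.cos_pi_div_four] at h1
  have hc2 : (1:ℝ)/2 < c^2 := by
    have h2 : (Real.sqrt 2 / 2)^2 ≤ c^2 := by
      apply sq_le_sq' _ hcgt.le
      have : (0:ℝ) ≤ Real.sqrt 2 / 2 := by positivity
      linarith
    have : (Real.sqrt 2 / 2)^2 = 1/2 := by
      rw [div_pow, Real.sq_sqrt (by norm_num : (2:ℝ) ≥ 0)]; norm_num
    -- strict: use strict inequality directly
    have h3 : (Real.sqrt 2 / 2) < c := hcgt
    have h0 : (0:ℝ) ≤ Real.sqrt 2 / 2 := by positivity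
    nlinarith
  have hc0 : 0 ≤ c := by nlinarith [Real.sqrt_nonneg 2]
  have haabs : c ≤ |a| := by
    have := hXU x hx u hu hxn hun
    rwa [real_inner_comm] at this
  have hbabs : c ≤ |b| := by
    have := hYU y hy u hu hyn hun
    rwa [real_inner_comm] at this
  have huu : ⟪u, u⟫ = 1 := by
    rw [real_inner_self_eq_norm_sq, hun]; norm_num
  have hxx : ⟪x, x⟫ = 1 := by
    rw [real_inner_self_eq_norm_sq, hxn]; norm_num
  have hyy : ⟪y, y⟫ = 1 := by
    rw [real_inner_self_eq_norm_sq, hyn]; norm_num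
  have hxu : ⟪x, u⟫ = a := real_inner_comm u x ▸ rfl
  have hyu : ⟪y, u⟫ = b := real_inner_comm u y ▸ rfl
  have huy : ⟪u, y⟫ = b := rfl
  have hux : ⟪u, x⟫ = a := rfl
  have hexp : ⟪x - a • u, y - b • u⟫ = ⟪x, y⟫ - a * b := by
    rw [inner_sub_left, inner_sub_right, inner_sub_right, real_inner_smul_left,
      real_inner_smul_left, real_inner_smul_right, real_inner_smul_right,
      hxu, huy, huu]
    ring
  have hxx' : ⟪x - a • u, x - a • u⟫ = 1 - a^2 := by
    rw [inner_sub_left, inner_sub_right, inner_sub_right, real_inner_smul_left,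
      real_inner_smul_left, real_inner_smul_right, real_inner_smul_right,
      hxu, hux, hxx, huu]
    ring
  have hyy' : ⟪y - b • u, y - b • u⟫ = 1 - b^2 := by
    rw [inner_sub_left, inner_sub_right, inner_sub_right, real_inner_smul_left,
      real_inner_smul_left, real_inner_smul_right, real_inner_smul_right,
      hyu, huy, hyy, huu]
    ring
  have hcs := real_inner_mul_inner_self_le (x - a • u) (y - b • u)
  rw [hexp, hxx', hyy'] at hcs
  have hxx'nn : (0:ℝ) ≤ 1 - a^2 := by rw [← hxx']; exact real_inner_self_nonneg
  have hyy'nn : (0:ℝ) ≤ 1 - b^2 := by rw [← hyy']; exact real_inner_self_nonneg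
  by_contra h
  push_neg at h
  exact same_sign_aux a b c ⟪x, y⟫ hc2 hc0 haabs hbabs hxy hcs hxx'nn hyy'nn h
end

section
/- For a fixed unit vector u ∈ ℝ^m and φ ∈ [0, π/4), the set of lines (1-dimensional subspaces) spanned by unit vectors x with |⟨x,u⟩| ≥ cos(φ) is geodesically convex in the Grassmannian Gr(m,1): for any two such lines spanned by unit vectors x, y with ⟨x,y⟩ ≥ 0, every unit vector g = αx + βy with α, β ≥ 0 satisfies |⟨g,u⟩| ≥ cos(φ). -/
/-!
Put `k = cos φ`; then `k > 0` and `2k² > 1`. Two unit vectors on opposite sides of the slab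
`|⟪·, u⟫| < k` are more than `√2` apart, i.e. at an obtuse angle, so `⟪x, y⟫ ≥ 0` forces `x` and `y`
onto the same side; after replacing `u` by `-u` both satisfy `⟪·, u⟫ ≥ k`. Then
`⟪g, u⟫ ≥ (α + β) k ≥ ‖g‖ k = k` by the triangle inequality.
-/

open RealInnerProductSpace

namespace RankOneGeodesicConvexity

lemma half_lt_cos_sq {φ : ℝ} (hφ : φ ∈ Set.Ico 0 (Real.pi / 4)) : 1 / 2 < Real.cos φ ^ 2 := by
  obtain ⟨hφ0, hφ1⟩ := hφ
  have hcos : 0 < Real.cos (2 * φ) :=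
    Real.cos_pos_of_mem_Ioo ⟨by linarith [Real.pi_pos], by linarith⟩
  rw [Real.cos_sq]
  linarith

variable {E : Type*} [NormedAddCommGroup E] [InnerProductSpace ℝ E]

lemma inner_neg_of_le_inner_of_inner_le_neg {x y u : E} (hx : ‖x‖ = 1) (hy : ‖y‖ = 1)
    (hu : ‖u‖ ≤ 1) {k : ℝ} (hk : 0 ≤ k) (hk2 : 1 / 2 < k ^ 2)
    (hxu : k ≤ ⟪x, u⟫) (hyu : ⟪y, u⟫ ≤ -k) : ⟪x, y⟫ < 0 := by
  have hgap : 2 * k ≤ ‖x - y‖ :=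
    calc 2 * k ≤ ⟪x - y, u⟫ := by rw [inner_sub_left]; linarith
      _ ≤ ‖x - y‖ * ‖u‖ := real_inner_le_norm _ _
      _ ≤ ‖x - y‖ := mul_le_of_le_one_right (norm_nonneg _) hu
  have hdist : ‖x - y‖ ^ 2 = 2 - 2 * ⟪x, y⟫ := by rw [norm_sub_sq_real, hx, hy]; ring
  nlinarith [pow_le_pow_left₀ (by linarith) hgap 2]

lemma exists_mem_pair_le_inner {x y u : E} (hx : ‖x‖ = 1) (hy : ‖y‖ = 1) (hu : ‖u‖ ≤ 1)
    {k : ℝ} (hk : 0 ≤ k) (hk2 : 1 / 2 < k ^ 2)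
    (hxu : k ≤ |⟪x, u⟫|) (hyu : k ≤ |⟪y, u⟫|) (hxy : 0 ≤ ⟪x, y⟫) :
    ∃ v ∈ ({u, -u} : Set E), k ≤ ⟪x, v⟫ ∧ k ≤ ⟪y, v⟫ := by
  simp only [Set.mem_insert_iff, Set.mem_singleton_iff, exists_eq_or_imp, exists_eq_left,
    inner_neg_right]
  rcases le_abs'.mp hxu with hxu | hxu <;> rcases le_abs'.mp hyu with hyu | hyu
  · exact Or.inr ⟨by linarith, by linarith⟩
  · have := inner_neg_of_le_inner_of_inner_le_neg hy hx hu hk hk2 hyu hxu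
    rw [real_inner_comm] at this
    linarith
  · linarith [inner_neg_of_le_inner_of_inner_le_neg hx hy hu hk hk2 hxu hyu]
  · exact Or.inl ⟨hxu, hyu⟩

lemma le_inner_smul_add_smul {x y u : E} (hx : ‖x‖ ≤ 1) (hy : ‖y‖ ≤ 1) {k : ℝ} (hk : 0 ≤ k)
    (hxu : k ≤ ⟪x, u⟫) (hyu : k ≤ ⟪y, u⟫) {α β : ℝ} (hα : 0 ≤ α) (hβ : 0 ≤ β)
    (hg : 1 ≤ ‖α • x + β • y‖) : k ≤ ⟪α • x + β • y, u⟫ := by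
  have hαβ : 1 ≤ α + β :=
    calc 1 ≤ ‖α • x + β • y‖ := hg
      _ ≤ ‖α • x‖ + ‖β • y‖ := norm_add_le _ _
      _ = α * ‖x‖ + β * ‖y‖ := by rw [norm_smul, norm_smul, Real.norm_of_nonneg hα,
          Real.norm_of_nonneg hβ]
      _ ≤ α + β := add_le_add (mul_le_of_le_one_right hα hx) (mul_le_of_le_one_right hβ hy)
  rw [inner_add_left, real_inner_smul_left, real_inner_smul_left]
  nlinarith [mul_le_mul_of_nonneg_left hxu hα, mul_le_mul_of_nonneg_left hyu hβ]

end RankOneGeodesicConvexity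

open RankOneGeodesicConvexity in
/-- geodesic convexity in `Gr(m,1)` of the set of lines within principal
angle `φ < π/4` of a fixed unit vector `u`: if `x, y` are unit vectors with
`|⟨x,u⟩| ≥ cos φ`, `|⟨y,u⟩| ≥ cos φ` and `⟨x,y⟩ ≥ 0`, then every unit vector
`g = α•x + β•y` with `α, β ≥ 0` satisfies `|⟨g,u⟩| ≥ cos φ`. -/
theorem rank_one_geodesic_convexity {m : ℕ}
    (u : EuclideanSpace ℝ (Fin m)) (hu : ‖u‖ = 1)
    (φ : ℝ) (hφ : φ ∈ Set.Ico 0 (Real.pi / 4))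
    (x y : EuclideanSpace ℝ (Fin m)) (hx : ‖x‖ = 1) (hy : ‖y‖ = 1)
    (hxu : Real.cos φ ≤ |⟪x, u⟫|) (hyu : Real.cos φ ≤ |⟪y, u⟫|)
    (hxy : 0 ≤ ⟪x, y⟫)
    (α β : ℝ) (hα : 0 ≤ α) (hβ : 0 ≤ β)
    (g : EuclideanSpace ℝ (Fin m)) (hg : g = α • x + β • y) (hgn : ‖g‖ = 1) :
    Real.cos φ ≤ |⟪g, u⟫| := by
  have hk : 0 ≤ Real.cos φ :=
    Real.cos_nonneg_of_mem_Icc ⟨by linarith [hφ.1, Real.pi_pos], by linarith [hφ.2, Real.pi_pos]⟩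
  obtain ⟨v, hv, hxv, hyv⟩ :=
    exists_mem_pair_le_inner hx hy hu.le hk (half_lt_cos_sq hφ) hxu hyu hxy
  have hgv : |⟪g, v⟫| = |⟪g, u⟫| := by
    rcases hv with rfl | rfl
    · rfl
    · rw [inner_neg_right, abs_neg]
  subst hg
  rw [← hgv]
  exact (le_inner_smul_add_smul hx.le hy.le hk hxv hyv hα hβ hgn.ge).trans (le_abs_self _)
end

section
/- Under the principal alignment setup (M = UΣV^T, X_p^T U_p = cos Θ, Δ_p sin Θ = (I − X_p X_p^T)U_p, Ξ = Q^T Σ^2 Q), the Riemannian gradient of f(X) = (1/2)‖(I − X X^T)M‖_F^2 at X_p, defined as −(I − X_p X_p^T) M M^T X_p, equals −Δ_p sin(Θ) Ξ cos(Θ). -/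
open Matrix Real

/-!
Since `Vᵀ V = 1`, `M Mᵀ = U Σ² Uᵀ`. Inserting `Q Qᵀ = 1` on both sides of `Σ²` splits
`(I − Xp Xpᵀ) M Mᵀ Xp` into the three factors `(I − Xp Xpᵀ) U Q = Δp sin Θ`, `Qᵀ Σ² Q = Ξ`
and `Qᵀ Uᵀ Xp = (Xpᵀ U Q)ᵀ = cos Θ`.
-/

namespace Matrix

variable {R : Type*} [CommRing R] {k l m n : Type*} [Fintype k] [Fintype n] [DecidableEq k]

theorem mul_transpose_mul_transpose_of_transpose_mul_self_eq_one
    (A : Matrix m k R) (V : Matrix n k R) (hV : Vᵀ * V = 1) :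
    A * Vᵀ * (A * Vᵀ)ᵀ = A * Aᵀ := by
  rw [transpose_mul, transpose_transpose, Matrix.mul_assoc, ← Matrix.mul_assoc Vᵀ, hV,
    Matrix.one_mul]

theorem mul_mul_eq_of_mul_transpose_eq_one (A : Matrix l k R) (B : Matrix k k R)
    (C : Matrix k m R) {Q : Matrix k k R} (hQ : Q * Qᵀ = 1) :
    A * B * C = A * Q * (Qᵀ * B * Q) * (Qᵀ * C) := by
  simp only [Matrix.mul_assoc]
  rw [← Matrix.mul_assoc Q Qᵀ, hQ, Matrix.one_mul, ← Matrix.mul_assoc Q Qᵀ, hQ, Matrix.one_mul]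

end Matrix

theorem gradient_compact_form_general {m n r : ℕ}
    (U : Matrix (Fin m) (Fin r) ℝ) (V : Matrix (Fin n) (Fin r) ℝ) (σ : Fin r → ℝ)
    (hV : Vᵀ * V = 1)
    (M : Matrix (Fin m) (Fin n) ℝ) (hM : M = U * Matrix.diagonal σ * Vᵀ)
    (Q : Matrix (Fin r) (Fin r) ℝ) (hQ : Qᵀ * Q = 1)
    (Xp Δp : Matrix (Fin m) (Fin r) ℝ)
    (θ : Fin r → ℝ)
    (hcos : Xpᵀ * (U * Q) = Matrix.diagonal (fun i => Real.cos (θ i)))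
    (hΔsin : Δp * Matrix.diagonal (fun i => Real.sin (θ i)) =
      ((1 : Matrix (Fin m) (Fin m) ℝ) - Xp * Xpᵀ) * (U * Q))
    (Ξ : Matrix (Fin r) (Fin r) ℝ)
    (hΞ : Ξ = Qᵀ * (Matrix.diagonal σ * Matrix.diagonal σ) * Q) :
    -(((1 : Matrix (Fin m) (Fin m) ℝ) - Xp * Xpᵀ) * M * Mᵀ * Xp) =
      -(Δp * Matrix.diagonal (fun i => Real.sin (θ i)) * Ξ *
        Matrix.diagonal (fun i => Real.cos (θ i))) := by
  have hMM : M * Mᵀ = U * (diagonal σ * diagonal σ) * Uᵀ := by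
    rw [hM, mul_transpose_mul_transpose_of_transpose_mul_self_eq_one _ _ hV, transpose_mul,
      diagonal_transpose, Matrix.mul_assoc U, Matrix.mul_assoc U, Matrix.mul_assoc]
  have hcos' : Qᵀ * (Uᵀ * Xp) = diagonal (fun i => Real.cos (θ i)) := by
    simpa [transpose_mul, Matrix.mul_assoc] using congrArg transpose hcos
  congr 1
  calc (1 - Xp * Xpᵀ) * M * Mᵀ * Xp
      = (1 - Xp * Xpᵀ) * U * (diagonal σ * diagonal σ) * (Uᵀ * Xp) := by
        rw [Matrix.mul_assoc _ M, hMM]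
        simp only [Matrix.mul_assoc]
    _ = (1 - Xp * Xpᵀ) * U * Q * (Qᵀ * (diagonal σ * diagonal σ) * Q) * (Qᵀ * (Uᵀ * Xp)) :=
        mul_mul_eq_of_mul_transpose_eq_one _ _ _ (mul_eq_one_comm.mp hQ)
    _ = Δp * diagonal (fun i => Real.sin (θ i)) * Ξ * diagonal (fun i => Real.cos (θ i)) := by
        rw [Matrix.mul_assoc _ U Q, ← hΔsin, ← hΞ, hcos']

/-- under the principal alignment setup, the Riemannian gradient
`grad f(Xp) = −(I − Xp Xpᵀ) M Mᵀ Xp` has the compact form `−Δp sin(Θ) Ξ cos(Θ)`. -/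
theorem gradient_compact_form {m n r : ℕ}
    (U : Matrix (Fin m) (Fin r) ℝ) (V : Matrix (Fin n) (Fin r) ℝ) (σ : Fin r → ℝ)
    (hU : Uᵀ * U = 1) (hV : Vᵀ * V = 1)
    (M : Matrix (Fin m) (Fin n) ℝ) (hM : M = U * Matrix.diagonal σ * Vᵀ)
    (Q : Matrix (Fin r) (Fin r) ℝ) (hQ : Qᵀ * Q = 1)
    (Xp Δp : Matrix (Fin m) (Fin r) ℝ) (hXp : Xpᵀ * Xp = 1)
    (θ : Fin r → ℝ)
    (hcos : Xpᵀ * (U * Q) = Matrix.diagonal (fun i => Real.cos (θ i)))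
    (hΔp : Δpᵀ * Δp = 1) (hXΔp : Xpᵀ * Δp = 0)
    (hΔsin : Δp * Matrix.diagonal (fun i => Real.sin (θ i)) =
      ((1 : Matrix (Fin m) (Fin m) ℝ) - Xp * Xpᵀ) * (U * Q))
    (Ξ : Matrix (Fin r) (Fin r) ℝ)
    (hΞ : Ξ = Qᵀ * (Matrix.diagonal σ * Matrix.diagonal σ) * Q) :
    -(((1 : Matrix (Fin m) (Fin m) ℝ) - Xp * Xpᵀ) * M * Mᵀ * Xp) =
      -(Δp * Matrix.diagonal (fun i => Real.sin (θ i)) * Ξ *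
        Matrix.diagonal (fun i => Real.cos (θ i))) :=
  gradient_compact_form_general U V σ hV M hM Q hQ Xp Δp θ hcos hΔsin Ξ hΞ
end

section
/- Under the principal alignment setup, for any tangent direction Δ (X_p^T Δ = 0), the Riemannian Hessian quadratic form hess f(X_p)[Δ,Δ] = −2⟨Δ Δ^T M, (I − X_p X_p^T)M⟩ + ‖(Δ X_p^T + X_p Δ^T)M‖_F^2 equals Tr[cos(Θ) Δ^T Δ cos(Θ) Ξ] − Tr[sin(Θ) Δ_p^T Δ Δ^T Δ_p sin(Θ) Ξ]. -/
open Matrix Real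

/-- under the principal alignment setup, for any tangent direction `Δ`
(`Xpᵀ Δ = 0`), the Hessian quadratic form
`−2⟨Δ Δᵀ M, (I − Xp Xpᵀ)M⟩ + ‖(Δ Xpᵀ + Xp Δᵀ)M‖_F²` equals
`Tr[cos(Θ) Δᵀ Δ cos(Θ) Ξ] − Tr[sin(Θ) Δpᵀ Δ Δᵀ Δp sin(Θ) Ξ]`. -/
theorem hessian_compact_form {m n r : ℕ}
    (U : Matrix (Fin m) (Fin r) ℝ) (V : Matrix (Fin n) (Fin r) ℝ) (σ : Fin r → ℝ)
    (hU : Uᵀ * U = 1) (hV : Vᵀ * V = 1)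
    (M : Matrix (Fin m) (Fin n) ℝ) (hM : M = U * Matrix.diagonal σ * Vᵀ)
    (Q : Matrix (Fin r) (Fin r) ℝ) (hQ : Qᵀ * Q = 1)
    (Xp Δp : Matrix (Fin m) (Fin r) ℝ) (hXp : Xpᵀ * Xp = 1)
    (θ : Fin r → ℝ)
    (hcos : Xpᵀ * (U * Q) = Matrix.diagonal (fun i => Real.cos (θ i)))
    (hΔp : Δpᵀ * Δp = 1) (hXΔp : Xpᵀ * Δp = 0)
    (hΔsin : Δp * Matrix.diagonal (fun i => Real.sin (θ i)) =
      ((1 : Matrix (Fin m) (Fin m) ℝ) - Xp * Xpᵀ) * (U * Q))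
    (Ξ : Matrix (Fin r) (Fin r) ℝ)
    (hΞ : Ξ = Qᵀ * (Matrix.diagonal σ * Matrix.diagonal σ) * Q)
    (Δ : Matrix (Fin m) (Fin r) ℝ) (hΔ : Xpᵀ * Δ = 0) :
    (-2) * Matrix.trace
        ((Δ * Δᵀ * M)ᵀ * (((1 : Matrix (Fin m) (Fin m) ℝ) - Xp * Xpᵀ) * M)) +
      Matrix.trace (((Δ * Xpᵀ + Xp * Δᵀ) * M)ᵀ * ((Δ * Xpᵀ + Xp * Δᵀ) * M)) =
    Matrix.trace
        (Matrix.diagonal (fun i => Real.cos (θ i)) * (Δᵀ * Δ) *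
          Matrix.diagonal (fun i => Real.cos (θ i)) * Ξ) -
      Matrix.trace
        (Matrix.diagonal (fun i => Real.sin (θ i)) * (Δpᵀ * Δ) * (Δᵀ * Δp) *
          Matrix.diagonal (fun i => Real.sin (θ i)) * Ξ) := by
  set C := Matrix.diagonal (fun i => Real.cos (θ i)) with hC
  set S := Matrix.diagonal (fun i => Real.sin (θ i)) with hS
  have hQQ : Q * Qᵀ = 1 := mul_eq_one_comm.mp hQ
  have hΔXp : Δᵀ * Xp = 0 := by
    have := congrArg Matrix.transpose hΔ
    simpa using this
  have hΔpXp : Δpᵀ * Xp = 0 := by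
    have := congrArg Matrix.transpose hXΔp
    simpa using this
  -- decomposition of U*Q
  have hUp : U * Q = Xp * C + Δp * S := by
    have h := hΔsin
    rw [Matrix.sub_mul, Matrix.one_mul, Matrix.mul_assoc, hcos] at h
    rw [h]
    abel
  -- M * Mᵀ = (U*Q) * Ξ * (U*Q)ᵀ
  have hN : M * Mᵀ = (U * Q) * Ξ * (U * Q)ᵀ := by
    subst hM hΞ
    simp only [Matrix.transpose_mul, Matrix.transpose_transpose,
      Matrix.diagonal_transpose, Matrix.mul_assoc]
    rw [show Vᵀ * (V * (Matrix.diagonal σ * Uᵀ)) = Matrix.diagonal σ * Uᵀ by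
      rw [← Matrix.mul_assoc, hV, Matrix.one_mul]]
    rw [show Q * (Qᵀ * (Matrix.diagonal σ * (Matrix.diagonal σ * (Q * (Qᵀ * Uᵀ)))))
        = Matrix.diagonal σ * (Matrix.diagonal σ * Uᵀ) by
      rw [← Matrix.mul_assoc Q Qᵀ, hQQ, Matrix.one_mul, ← Matrix.mul_assoc Q Qᵀ, hQQ,
        Matrix.one_mul]]
  have hUpΔ : (U * Q)ᵀ * Δ = S * (Δpᵀ * Δ) := by
    rw [hUp, Matrix.transpose_add, Matrix.transpose_mul, Matrix.transpose_mul,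
      hC, hS, Matrix.diagonal_transpose, Matrix.diagonal_transpose,
      Matrix.add_mul, Matrix.mul_assoc, Matrix.mul_assoc, hΔ, Matrix.mul_zero, zero_add,
      ← hS]
  have hΔUp : Δᵀ * (U * Q) = Δᵀ * Δp * S := by
    have := congrArg Matrix.transpose hUpΔ
    simpa [Matrix.transpose_mul, Matrix.mul_assoc, hS] using this
  have hUpXp : (U * Q)ᵀ * Xp = C := by
    have := congrArg Matrix.transpose hcos
    simpa [hC] using this
  set N := M * Mᵀ with hNdef
  have hXNX : Xpᵀ * (N * Xp) = C * (Ξ * C) := by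
    rw [hN, Matrix.mul_assoc (U * Q * Ξ), hUpXp, ← Matrix.mul_assoc Xpᵀ,
      ← Matrix.mul_assoc Xpᵀ, hcos, Matrix.mul_assoc]
  have hΔNΔ : Δᵀ * (N * Δ) = Δᵀ * Δp * S * Ξ * (S * (Δpᵀ * Δ)) := by
    rw [hN, Matrix.mul_assoc (U * Q * Ξ), hUpΔ, ← Matrix.mul_assoc Δᵀ,
      ← Matrix.mul_assoc Δᵀ, hΔUp]
  set T := Matrix.trace (Δᵀ * (N * Δ)) with hT
  -- first term
  have e1 : Δᵀ * (((1 : Matrix (Fin m) (Fin m) ℝ) - Xp * Xpᵀ) * M) = Δᵀ * M := by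
    rw [Matrix.sub_mul, Matrix.one_mul, Matrix.mul_sub, Matrix.mul_assoc Xp,
      ← Matrix.mul_assoc Δᵀ Xp, hΔXp, Matrix.zero_mul, sub_zero]
  have h1 : Matrix.trace
      ((Δ * Δᵀ * M)ᵀ * (((1 : Matrix (Fin m) (Fin m) ℝ) - Xp * Xpᵀ) * M)) = T := by
    simp only [Matrix.transpose_mul, Matrix.transpose_transpose, Matrix.mul_assoc]
    rw [e1, Matrix.trace_mul_comm Mᵀ]
    simp only [Matrix.mul_assoc]
    rw [← hNdef, Matrix.trace_mul_comm Δ]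
    simp only [Matrix.mul_assoc]
    exact hT.symm
  -- second term
  have hAA : (Δ * Xpᵀ + Xp * Δᵀ)ᵀ * (Δ * Xpᵀ + Xp * Δᵀ)
      = Xp * (Δᵀ * Δ) * Xpᵀ + Δ * Δᵀ := by
    simp only [Matrix.transpose_add, Matrix.transpose_mul, Matrix.transpose_transpose,
      Matrix.add_mul, Matrix.mul_add, Matrix.mul_assoc]
    rw [show Δᵀ * (Xp * Δᵀ) = 0 by rw [← Matrix.mul_assoc, hΔXp, Matrix.zero_mul],
      show Xpᵀ * (Δ * Xpᵀ) = 0 by rw [← Matrix.mul_assoc, hΔ, Matrix.zero_mul],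
      show Xpᵀ * (Xp * Δᵀ) = Δᵀ by rw [← Matrix.mul_assoc, hXp, Matrix.one_mul]]
    simp [Matrix.mul_assoc]
  have h2 : Matrix.trace (((Δ * Xpᵀ + Xp * Δᵀ) * M)ᵀ * ((Δ * Xpᵀ + Xp * Δᵀ) * M))
      = Matrix.trace (C * (Δᵀ * Δ) * C * Ξ) + T := by
    have key : (((Δ * Xpᵀ + Xp * Δᵀ) * M)ᵀ * ((Δ * Xpᵀ + Xp * Δᵀ) * M))
        = Mᵀ * ((Xp * (Δᵀ * Δ) * Xpᵀ + Δ * Δᵀ) * M) := by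
      rw [Matrix.transpose_mul, Matrix.mul_assoc,
        ← Matrix.mul_assoc ((Δ * Xpᵀ + Xp * Δᵀ)ᵀ), hAA]
    rw [key, Matrix.add_mul, Matrix.mul_add, Matrix.trace_add]
    congr 1
    · rw [Matrix.trace_mul_comm Mᵀ]
      simp only [Matrix.mul_assoc]
      rw [← hNdef, Matrix.trace_mul_comm Xp]
      simp only [Matrix.mul_assoc]
      rw [hXNX, Matrix.trace_mul_comm Δᵀ]
      simp only [Matrix.mul_assoc]
      rw [Matrix.trace_mul_comm Δ]
      simp only [Matrix.mul_assoc]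
      rw [Matrix.trace_mul_comm C]
      simp only [Matrix.mul_assoc]
      rw [Matrix.trace_mul_comm Ξ]
      simp only [Matrix.mul_assoc]
    · rw [Matrix.trace_mul_comm Mᵀ]
      simp only [Matrix.mul_assoc]
      rw [← hNdef, Matrix.trace_mul_comm Δ]
      simp only [Matrix.mul_assoc]
      exact hT.symm
  -- core term equals the sine term
  have h3 : T = Matrix.trace (S * (Δpᵀ * Δ) * (Δᵀ * Δp) * S * Ξ) := by
    rw [hT, hΔNΔ]
    simp only [Matrix.mul_assoc]
    rw [Matrix.trace_mul_comm Δᵀ]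
    simp only [Matrix.mul_assoc]
    rw [Matrix.trace_mul_comm Δp]
    simp only [Matrix.mul_assoc]
    rw [Matrix.trace_mul_comm S]
    simp only [Matrix.mul_assoc]
    rw [Matrix.trace_mul_comm Ξ]
    simp only [Matrix.mul_assoc]
  rw [h1, h2, h3]
  ring
end

section
/- Under the principal alignment setup, if some principal angle θ_i > π/4, then there exists a tangent direction Δ with X_p^T Δ = 0 and ‖Δ‖_F = 1 such that the Hessian quadratic form equals ξ_i (cos²(θ_i) − sin²(θ_i)) < 0, where ξ_i = Ξ_{i,i} ≥ σ_min² > 0. In particular the Hessian of f is not positive semidefinite at X_p. -/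
/-!
Take `Δ = Δp eᵢeᵢᵀ`, the `i`-th column of `Δp` kept in place. Since `Δpᵀ Δp = 1`, both
`Δᵀ Δ` and `Δpᵀ Δ` collapse to `eᵢeᵢᵀ`, so the Hessian form reduces to
`ξᵢ (cos² θᵢ - sin² θᵢ) = ξᵢ cos 2θᵢ`. Here `ξᵢ ≥ σ_min² > 0` because `Ξ = Qᵀ Σ² Q` with `Q`
orthogonal, and `cos 2θᵢ < 0` because `π/2 < 2θᵢ ≤ π`.
-/

open Matrix Real

namespace Matrix

variable {m n R : Type*} [Fintype m] [Fintype n] [DecidableEq n]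

theorem diagonal_mul_single_mul_diagonal [Semiring R] (d e : n → R) (i j : n) (a : R) :
    diagonal d * single i j a * diagonal e = single i j (d i * a * e j) := by
  ext k l
  by_cases h : i = k ∧ j = l
  · obtain ⟨rfl, rfl⟩ := h
    simp
  · simp [h]

section CommRing

variable [CommRing R]

theorem transpose_mul_mul_single_of_orthonormal {Δp : Matrix m n R} (hΔp : Δpᵀ * Δp = 1)
    (i j : n) (a : R) : Δpᵀ * (Δp * single i j a) = single i j a := by
  rw [← Matrix.mul_assoc, hΔp, Matrix.one_mul]

theorem mul_single_transpose_mul_of_orthonormal {Δp : Matrix m n R} (hΔp : Δpᵀ * Δp = 1)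
    (i : n) (a : R) : (Δp * single i i a)ᵀ * Δp = single i i a := by
  rw [transpose_mul, Matrix.mul_assoc, hΔp, Matrix.mul_one, transpose_single]

theorem mul_single_transpose_mul_self_of_orthonormal {Δp : Matrix m n R}
    (hΔp : Δpᵀ * Δp = 1) (i : n) :
    (Δp * single i i (1 : R))ᵀ * (Δp * single i i (1 : R)) = single i i 1 := by
  rw [← Matrix.mul_assoc, mul_single_transpose_mul_of_orthonormal hΔp, single_mul_single_same,
    one_mul]

/-- The Hessian quadratic form `hess f(X_p)[Δ, Δ]`, written with `c = cos ∘ θ` and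
`s = sin ∘ θ`. -/
def principalHessianForm (c s : n → R) (Ξ : Matrix n n R) (Δp Δ : Matrix m n R) : R :=
  trace (diagonal c * (Δᵀ * Δ) * diagonal c * Ξ) -
    trace (diagonal s * (Δpᵀ * Δ) * (Δᵀ * Δp) * diagonal s * Ξ)

theorem principalHessianForm_mul_single {Δp : Matrix m n R} (hΔp : Δpᵀ * Δp = 1)
    (c s : n → R) (Ξ : Matrix n n R) (i : n) :
    principalHessianForm c s Ξ Δp (Δp * single i i (1 : R)) = Ξ i i * (c i ^ 2 - s i ^ 2) := by
  rw [principalHessianForm, mul_single_transpose_mul_self_of_orthonormal hΔp,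
    transpose_mul_mul_single_of_orthonormal hΔp, mul_single_transpose_mul_of_orthonormal hΔp,
    Matrix.mul_assoc (diagonal s), single_mul_single_same, diagonal_mul_single_mul_diagonal,
    diagonal_mul_single_mul_diagonal, trace_single_mul, trace_single_mul, smul_eq_mul,
    smul_eq_mul]
  ring

end CommRing

/-- For orthogonal `Q` the diagonal entries of `Qᵀ D Q` are convex combinations of those of
`D`. -/
theorem le_transpose_mul_diagonal_mul_apply_self {Q : Matrix n n ℝ} (hQ : Qᵀ * Q = 1)
    {d : n → ℝ} {a : ℝ} (hd : ∀ k, a ≤ d k) (i : n) :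
    a ≤ (Qᵀ * diagonal d * Q) i i := by
  have hcol : ∑ k, Q k i * Q k i = 1 := by
    simpa [mul_apply] using congrFun (congrFun hQ i) i
  calc a = ∑ k, a * (Q k i * Q k i) := by rw [← Finset.mul_sum, hcol, mul_one]
    _ ≤ ∑ k, d k * (Q k i * Q k i) :=
      Finset.sum_le_sum fun k _ => mul_le_mul_of_nonneg_right (hd k) (mul_self_nonneg _)
    _ = (Qᵀ * diagonal d * Q) i i := by
      rw [mul_apply]
      exact Finset.sum_congr rfl fun k _ => by rw [mul_diagonal, transpose_apply]; ring

end Matrix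

theorem cos_sq_lt_sin_sq_of_pi_div_four_lt {θ : ℝ} (h₁ : π / 4 < θ) (h₂ : θ < 3 * π / 4) :
    cos θ ^ 2 < sin θ ^ 2 := by
  rw [← sub_neg, ← cos_two_mul']
  exact cos_neg_of_pi_div_two_lt_of_lt (by linarith) (by linarith)

theorem hessian_escaping_direction_general {m r : ℕ}
    (σ : Fin r → ℝ)
    (σmin : ℝ) (hσmin : 0 < σmin) (hσ : ∀ i, σmin ≤ σ i)
    (Q : Matrix (Fin r) (Fin r) ℝ) (hQ : Qᵀ * Q = 1)
    (Xp Δp : Matrix (Fin m) (Fin r) ℝ)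
    (θ : Fin r → ℝ) (hθ : ∀ i, θ i ∈ Set.Icc 0 (π / 2))
    (hΔp : Δpᵀ * Δp = 1) (hXΔp : Xpᵀ * Δp = 0)
    (Ξ : Matrix (Fin r) (Fin r) ℝ)
    (hΞ : Ξ = Qᵀ * (Matrix.diagonal σ * Matrix.diagonal σ) * Q)
    (i0 : Fin r) (hi0 : π / 4 < θ i0) :
    ∃ Δ : Matrix (Fin m) (Fin r) ℝ,
      Xpᵀ * Δ = 0 ∧ Matrix.trace (Δᵀ * Δ) = 1 ∧
      (Matrix.trace
          (Matrix.diagonal (fun i => Real.cos (θ i)) * (Δᵀ * Δ) *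
            Matrix.diagonal (fun i => Real.cos (θ i)) * Ξ) -
        Matrix.trace
          (Matrix.diagonal (fun i => Real.sin (θ i)) * (Δpᵀ * Δ) * (Δᵀ * Δp) *
            Matrix.diagonal (fun i => Real.sin (θ i)) * Ξ)
        = Ξ i0 i0 * (Real.cos (θ i0) ^ 2 - Real.sin (θ i0) ^ 2)) ∧
      (Matrix.trace
          (Matrix.diagonal (fun i => Real.cos (θ i)) * (Δᵀ * Δ) *
            Matrix.diagonal (fun i => Real.cos (θ i)) * Ξ) -
        Matrix.trace
          (Matrix.diagonal (fun i => Real.sin (θ i)) * (Δpᵀ * Δ) * (Δᵀ * Δp) *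
            Matrix.diagonal (fun i => Real.sin (θ i)) * Ξ)
        < 0) := by
  have hform := principalHessianForm_mul_single hΔp (fun i => cos (θ i)) (fun i => sin (θ i)) Ξ i0
  have hξ : 0 < Ξ i0 i0 := by
    rw [hΞ, diagonal_mul_diagonal]
    exact (mul_pos hσmin hσmin).trans_le <| le_transpose_mul_diagonal_mul_apply_self hQ
      (fun k => mul_self_le_mul_self hσmin.le (hσ k)) i0
  have hangle : cos (θ i0) ^ 2 < sin (θ i0) ^ 2 :=
    cos_sq_lt_sin_sq_of_pi_div_four_lt hi0 (by linarith [(hθ i0).2, pi_pos])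
  refine ⟨Δp * single i0 i0 1, by rw [← Matrix.mul_assoc, hXΔp, zero_mul], ?_, hform, ?_⟩
  · rw [mul_single_transpose_mul_self_of_orthonormal hΔp, trace_single_eq_same]
  · exact hform.trans_lt (mul_neg_of_pos_of_neg hξ (sub_neg.mpr hangle))

/-- under the principal alignment setup, if some principal angle
`θ i0 > π/4`, then there is a unit-Frobenius-norm tangent direction `Δ` on which the
Hessian quadratic form equals `ξ_{i0}(cos²θ_{i0} − sin²θ_{i0}) < 0`; in particular the
Hessian is not positive semidefinite at `Xp`. -/
theorem hessian_escaping_direction {m n r : ℕ}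
    (U : Matrix (Fin m) (Fin r) ℝ) (V : Matrix (Fin n) (Fin r) ℝ) (σ : Fin r → ℝ)
    (hU : Uᵀ * U = 1) (hV : Vᵀ * V = 1)
    (σmin : ℝ) (hσmin : 0 < σmin) (hσ : ∀ i, σmin ≤ σ i)
    (M : Matrix (Fin m) (Fin n) ℝ) (hM : M = U * Matrix.diagonal σ * Vᵀ)
    (Q : Matrix (Fin r) (Fin r) ℝ) (hQ : Qᵀ * Q = 1)
    (Xp Δp : Matrix (Fin m) (Fin r) ℝ) (hXp : Xpᵀ * Xp = 1)
    (θ : Fin r → ℝ) (hθ : ∀ i, θ i ∈ Set.Icc 0 (π / 2))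
    (hcos : Xpᵀ * (U * Q) = Matrix.diagonal (fun i => Real.cos (θ i)))
    (hΔp : Δpᵀ * Δp = 1) (hXΔp : Xpᵀ * Δp = 0)
    (hΔsin : Δp * Matrix.diagonal (fun i => Real.sin (θ i)) =
      ((1 : Matrix (Fin m) (Fin m) ℝ) - Xp * Xpᵀ) * (U * Q))
    (Ξ : Matrix (Fin r) (Fin r) ℝ)
    (hΞ : Ξ = Qᵀ * (Matrix.diagonal σ * Matrix.diagonal σ) * Q)
    (i0 : Fin r) (hi0 : π / 4 < θ i0) :
    ∃ Δ : Matrix (Fin m) (Fin r) ℝ,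
      Xpᵀ * Δ = 0 ∧ Matrix.trace (Δᵀ * Δ) = 1 ∧
      (Matrix.trace
          (Matrix.diagonal (fun i => Real.cos (θ i)) * (Δᵀ * Δ) *
            Matrix.diagonal (fun i => Real.cos (θ i)) * Ξ) -
        Matrix.trace
          (Matrix.diagonal (fun i => Real.sin (θ i)) * (Δpᵀ * Δ) * (Δᵀ * Δp) *
            Matrix.diagonal (fun i => Real.sin (θ i)) * Ξ)
        = Ξ i0 i0 * (Real.cos (θ i0) ^ 2 - Real.sin (θ i0) ^ 2)) ∧
      (Matrix.trace
          (Matrix.diagonal (fun i => Real.cos (θ i)) * (Δᵀ * Δ) *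
            Matrix.diagonal (fun i => Real.cos (θ i)) * Ξ) -
        Matrix.trace
          (Matrix.diagonal (fun i => Real.sin (θ i)) * (Δpᵀ * Δ) * (Δᵀ * Δp) *
            Matrix.diagonal (fun i => Real.sin (θ i)) * Ξ)
        < 0) :=
  hessian_escaping_direction_general σ σmin hσmin hσ Q hQ Xp Δp θ hθ hΔp hXΔp Ξ hΞ i0 hi0
end

section
/- Let X_p be a critical point of f (so every principal angle θ_i to col(U) is 0 or π/2), not equal to [U] (so some θ_i = π/2). Then the direction Δ_crit = U_p sin(Θ) is tangent at X_p and satisfies hess f(X_p)[Δ_crit, Δ_crit] = −Tr[sin²(Θ) Ξ] < 0. Hence every critical point of f other than [U] is a strict saddle. -/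
open Matrix Real

/-! At a critical point `Xpᵀ U Q = cos Θ` with `cos Θ sin Θ = 0`, so `Δ = U Q sin Θ` satisfies
both `Xpᵀ Δ = 0` and `Δ Xpᵀ M = 0`. For a tangent `Δ` the Hessian form equals
`‖Δ Xpᵀ M‖_F² − ‖Δᵀ M‖_F²`, hence here `−‖Δᵀ M‖_F²`, and `Δᵀ M = sin Θ Qᵀ Σ Vᵀ` has squared norm
`Tr[sin²Θ Ξ]`. It is nonzero because `Q` and `Σ` are invertible while `sin θ_{i0} = 1`. -/

section Hessian

variable {R : Type*} [CommRing R] {m n k : Type*} [Fintype m] [Fintype n] [Fintype k]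
  [DecidableEq m]

/-- `hess f(X)[Δ, Δ]` in the paper's notation. -/
def grassmannHessian (X : Matrix m k R) (M : Matrix m n R) (Δ : Matrix m k R) : R :=
  -2 * trace ((Δ * Δᵀ * M)ᵀ * ((1 - X * Xᵀ) * M)) +
    trace (((Δ * Xᵀ + X * Δᵀ) * M)ᵀ * ((Δ * Xᵀ + X * Δᵀ) * M))

/-- `Xᵀ Δ = 0` kills all cross terms, and `Xᵀ X = 1` turns `‖X Δᵀ M‖²` into `‖Δᵀ M‖²`. -/
theorem grassmannHessian_eq_of_tangent [DecidableEq k] {X Δ : Matrix m k R} (M : Matrix m n R)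
    (hX : Xᵀ * X = 1) (hΔ : Xᵀ * Δ = 0) :
    grassmannHessian X M Δ =
      trace ((Δ * Xᵀ * M)ᵀ * (Δ * Xᵀ * M)) - trace ((Δᵀ * M)ᵀ * (Δᵀ * M)) := by
  have hΔt : Δᵀ * X = 0 := by simpa using congrArg transpose hΔ
  have hXZ : ∀ Z : Matrix k n R, Xᵀ * (X * Z) = Z := fun Z => by
    rw [← Matrix.mul_assoc, hX, Matrix.one_mul]
  have hXΔ : ∀ Z : Matrix k n R, Xᵀ * (Δ * Z) = 0 := fun Z => by
    rw [← Matrix.mul_assoc, hΔ, Matrix.zero_mul]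
  have hΔX : ∀ Z : Matrix k n R, Δᵀ * (X * Z) = 0 := fun Z => by
    rw [← Matrix.mul_assoc, hΔt, Matrix.zero_mul]
  simp only [grassmannHessian, transpose_mul, transpose_add, transpose_transpose,
    Matrix.add_mul, Matrix.mul_add, Matrix.sub_mul, Matrix.mul_sub, Matrix.one_mul,
    Matrix.mul_assoc, hXZ, hXΔ, hΔX, Matrix.mul_zero, trace_add, trace_sub, trace_zero]
  ring

end Hessian

theorem trace_transpose_mul_self_pos {m n : Type*} [Fintype m] [Fintype n]
    {A : Matrix m n ℝ} (hA : A ≠ 0) : 0 < trace (Aᵀ * A) := by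
  rw [← conjTranspose_eq_transpose_of_trivial]
  exact (posSemidef_conjTranspose_mul_self A).trace_nonneg.lt_of_ne'
    (trace_conjTranspose_mul_self_eq_zero_iff.not.mpr hA)

section PrincipalAlignment

variable {R : Type*} [CommRing R] {m n k : Type*} [Fintype m] [Fintype k] [DecidableEq k]
  {U X : Matrix m k R} {V : Matrix n k R} {Q C S D : Matrix k k R}

theorem mul_transpose_mul_eq_zero_of_alignment (hQ : Qᵀ * Q = 1)
    (hcos : Xᵀ * (U * Q) = C) (hSC : S * C = 0) :
    U * Q * S * Xᵀ * (U * D * Vᵀ) = 0 := by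
  have hXU : Xᵀ * U = C * Qᵀ := by
    rw [← hcos, Matrix.mul_assoc, Matrix.mul_assoc, mul_eq_one_comm.mp hQ, Matrix.mul_one]
  calc U * Q * S * Xᵀ * (U * D * Vᵀ) = U * Q * (S * (Xᵀ * U)) * D * Vᵀ := by
        simp only [Matrix.mul_assoc]
    _ = U * Q * (S * C) * Qᵀ * D * Vᵀ := by rw [hXU]; simp only [Matrix.mul_assoc]
    _ = 0 := by simp [hSC]

variable [Fintype n]

theorem transpose_mul_ne_zero_of_alignment (hU : Uᵀ * U = 1) (hV : Vᵀ * V = 1)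
    (hQ : IsUnit Qᵀ) (hD : IsUnit D) (hS : S ≠ 0) :
    (U * Q * S)ᵀ * (U * D * Vᵀ) ≠ 0 := by
  intro h
  have hrestrict : (U * Q * S)ᵀ * (U * D * Vᵀ) * V = Sᵀ * (Qᵀ * D) := by
    simp only [transpose_mul, Matrix.mul_assoc]
    rw [← Matrix.mul_assoc Uᵀ, hU, hV, Matrix.one_mul, Matrix.mul_one]
  rw [h, Matrix.zero_mul, eq_comm, (hQ.mul hD).mul_left_eq_zero, transpose_eq_zero] at hrestrict
  exact hS hrestrict

theorem trace_transpose_mul_self_of_alignment (hU : Uᵀ * U = 1) (hV : Vᵀ * V = 1) :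
    trace (((U * Q * S)ᵀ * (U * D * Vᵀ))ᵀ * ((U * Q * S)ᵀ * (U * D * Vᵀ))) =
      trace (S * Sᵀ * (Qᵀ * (D * Dᵀ) * Q)) := by
  have hreduce : (U * Q * S)ᵀ * (U * D * Vᵀ) = Sᵀ * Qᵀ * D * Vᵀ := by
    simp only [transpose_mul, Matrix.mul_assoc]
    rw [← Matrix.mul_assoc Uᵀ, hU, Matrix.one_mul]
  rw [hreduce]
  calc trace ((Sᵀ * Qᵀ * D * Vᵀ)ᵀ * (Sᵀ * Qᵀ * D * Vᵀ))
      = trace (V * (Dᵀ * Q * (S * Sᵀ * Qᵀ * D)) * Vᵀ) := by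
        simp only [transpose_mul, transpose_transpose, Matrix.mul_assoc]
    _ = trace (Dᵀ * Q * (S * Sᵀ * Qᵀ * D)) := by
        rw [trace_mul_comm, ← Matrix.mul_assoc, hV, Matrix.one_mul]
    _ = trace (S * Sᵀ * (Qᵀ * (D * Dᵀ) * Q)) := by
        rw [trace_mul_comm]; simp only [Matrix.mul_assoc]

end PrincipalAlignment

/-- at a critical point `Xp` (all principal angles `0` or `π/2`) other
than `[U]` (some angle is `π/2`), the direction `Δcrit = Up sin(Θ)` is tangent at `Xp`
and the Hessian quadratic form
`−2⟨Δ Δᵀ M, (I − Xp Xpᵀ)M⟩ + ‖(Δ Xpᵀ + Xp Δᵀ)M‖_F²` on it equals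
`−Tr[sin²(Θ) Ξ] < 0`: every such critical point is a strict saddle. -/
theorem strict_saddle_at_critical {m n r : ℕ}
    (U : Matrix (Fin m) (Fin r) ℝ) (V : Matrix (Fin n) (Fin r) ℝ) (σ : Fin r → ℝ)
    (hU : Uᵀ * U = 1) (hV : Vᵀ * V = 1)
    (σmin : ℝ) (hσmin : 0 < σmin) (hσ : ∀ i, σmin ≤ σ i)
    (M : Matrix (Fin m) (Fin n) ℝ) (hM : M = U * Matrix.diagonal σ * Vᵀ)
    (Q : Matrix (Fin r) (Fin r) ℝ) (hQ : Qᵀ * Q = 1)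
    (Xp : Matrix (Fin m) (Fin r) ℝ) (hXp : Xpᵀ * Xp = 1)
    (θ : Fin r → ℝ) (hθ : ∀ i, θ i = 0 ∨ θ i = π / 2)
    (hcos : Xpᵀ * (U * Q) = Matrix.diagonal (fun i => Real.cos (θ i)))
    (Ξ : Matrix (Fin r) (Fin r) ℝ)
    (hΞ : Ξ = Qᵀ * (Matrix.diagonal σ * Matrix.diagonal σ) * Q)
    (i0 : Fin r) (hi0 : θ i0 = π / 2)
    (Δcrit : Matrix (Fin m) (Fin r) ℝ)
    (hΔcrit : Δcrit = U * Q * Matrix.diagonal (fun i => Real.sin (θ i))) :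
    Xpᵀ * Δcrit = 0 ∧
    ((-2) * Matrix.trace
        ((Δcrit * Δcritᵀ * M)ᵀ * (((1 : Matrix (Fin m) (Fin m) ℝ) - Xp * Xpᵀ) * M)) +
      Matrix.trace (((Δcrit * Xpᵀ + Xp * Δcritᵀ) * M)ᵀ *
        ((Δcrit * Xpᵀ + Xp * Δcritᵀ) * M))
      = -Matrix.trace (Matrix.diagonal (fun i => Real.sin (θ i) ^ 2) * Ξ)) ∧
    ((-2) * Matrix.trace
        ((Δcrit * Δcritᵀ * M)ᵀ * (((1 : Matrix (Fin m) (Fin m) ℝ) - Xp * Xpᵀ) * M)) +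
      Matrix.trace (((Δcrit * Xpᵀ + Xp * Δcritᵀ) * M)ᵀ *
        ((Δcrit * Xpᵀ + Xp * Δcritᵀ) * M))
      < 0) := by
  set S := diagonal fun i => sin (θ i)
  have hcs : ∀ i, cos (θ i) * sin (θ i) = 0 := fun i => by rcases hθ i with h | h <;> simp [h]
  have hCS : diagonal (fun i => cos (θ i)) * S = 0 := by simp [S, hcs]
  have hSC : S * diagonal (fun i => cos (θ i)) = 0 := by simp [S, mul_comm, hcs]
  have htangent : Xpᵀ * Δcrit = 0 := by rw [hΔcrit, ← Matrix.mul_assoc, hcos, hCS]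
  have hS : S ≠ 0 := fun h => by simpa [S, hi0] using congrFun (congrFun h i0) i0
  have hD : IsUnit (diagonal σ) :=
    isUnit_diagonal.mpr (Pi.isUnit_iff.mpr fun i => (hσmin.trans_le (hσ i)).ne'.isUnit)
  have hnormal : trace ((Δcritᵀ * M)ᵀ * (Δcritᵀ * M)) =
      trace (diagonal (fun i => sin (θ i) ^ 2) * Ξ) := by
    rw [hΔcrit, hM, trace_transpose_mul_self_of_alignment hU hV, hΞ]
    simp [S, sq]
  have hpos : 0 < trace ((Δcritᵀ * M)ᵀ * (Δcritᵀ * M)) := by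
    rw [hΔcrit, hM]
    exact trace_transpose_mul_self_pos
      (transpose_mul_ne_zero_of_alignment hU hV (IsUnit.of_mul_eq_one Q hQ) hD hS)
  have hess : grassmannHessian Xp M Δcrit = -trace ((Δcritᵀ * M)ᵀ * (Δcritᵀ * M)) := by
    rw [grassmannHessian_eq_of_tangent M hXp htangent, hΔcrit, hM,
      mul_transpose_mul_eq_zero_of_alignment hQ hcos hSC]
    simp
  exact ⟨htangent, hess.trans (congrArg Neg.neg hnormal), hess.trans_lt (neg_neg_of_pos hpos)⟩
end

section
/- Consider M = (0,1,1)^T ∈ ℝ^3 with observed index set Ω = {2,3}. The partially observed cost f(x) = (3/2)·min over y ∈ ℝ of Σ_{i∈Ω}(y x_i − M_i)² evaluated at the unit vector x_ε = (√(1−2ε²), ε, ε)^T equals 0 for ε ∈ (0, 1/√2] and equals 3/2 for ε = 0. In particular f is discontinuous at x = (1,0,0)^T. -/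
/-- The partially observed rank-1 cost for `M = (0,1,1)ᵀ`, `Ω = {2,3}`, `p = 2/3`:
`F(x) = (1/p)·(1/2)·min_{y∈ℝ} [(y x₂ − 1)² + (y x₃ − 1)²]
      = (3/4)·inf_{y∈ℝ} [(y x₂ − 1)² + (y x₃ − 1)²]`. -/
noncomputable def Fpart (x : Fin 3 → ℝ) : ℝ :=
  (3 / 4) * sInf (Set.range fun y : ℝ => (y * x 1 - 1) ^ 2 + (y * x 2 - 1) ^ 2)

lemma Fpart_eps (a ε : ℝ) (hε : ε ≠ 0) : Fpart ![a, ε, ε] = 0 := by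
  unfold Fpart
  have h : sInf (Set.range fun y : ℝ =>
      (y * (![a, ε, ε] : Fin 3 → ℝ) 1 - 1) ^ 2 + (y * (![a, ε, ε] : Fin 3 → ℝ) 2 - 1) ^ 2) = 0 := by
    simp only [Matrix.cons_val_one, Matrix.head_cons, Matrix.cons_val_two, Matrix.tail_cons]
    apply le_antisymm
    · have hbdd : BddBelow (Set.range fun y : ℝ => (y * ε - 1) ^ 2 + (y * ε - 1) ^ 2) := by
        refine ⟨0, ?_⟩
        rintro z ⟨y, rfl⟩; positivity
      have hmem : (0 : ℝ) ∈ Set.range fun y : ℝ => (y * ε - 1) ^ 2 + (y * ε - 1) ^ 2 := by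
        rw [Set.mem_range]
        refine ⟨1 / ε, ?_⟩
        field_simp
        norm_num
      exact csInf_le hbdd hmem
    · refine le_csInf ⟨_, Set.mem_range_self (0 : ℝ)⟩ ?_
      rintro z ⟨y, rfl⟩; positivity
  rw [h, mul_zero]

lemma Fpart_zero (a : ℝ) : Fpart ![a, 0, 0] = 3 / 2 := by
  unfold Fpart
  have h : (fun y : ℝ =>
      (y * (![a, 0, 0] : Fin 3 → ℝ) 1 - 1) ^ 2 + (y * (![a, 0, 0] : Fin 3 → ℝ) 2 - 1) ^ 2)
      = fun _ : ℝ => (2 : ℝ) := by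
    funext y
    simp only [Matrix.cons_val_one, Matrix.head_cons, Matrix.cons_val_two, Matrix.tail_cons, Matrix.cons_val_zero]
    ring
  rw [h, Set.range_const, csInf_singleton]
  norm_num

/-- at the unit vector `x_ε = (√(1−2ε²), ε, ε)ᵀ` the cost `Fpart`
equals `0` for `ε ∈ (0, 1/√2]` and `3/2` for `ε = 0`; in particular `Fpart` is
discontinuous at `x = (1,0,0)ᵀ`. -/
theorem partial_cost_discontinuous :
    (∀ ε : ℝ, ε ∈ Set.Ioc 0 (1 / Real.sqrt 2) →
      Fpart ![Real.sqrt (1 - 2 * ε ^ 2), ε, ε] = 0) ∧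
    Fpart ![Real.sqrt (1 - 2 * (0 : ℝ) ^ 2), 0, 0] = 3 / 2 ∧
    ¬ ContinuousAt Fpart ![1, 0, 0] := by
  refine ⟨fun ε hε => Fpart_eps _ _ (ne_of_gt hε.1), Fpart_zero _, ?_⟩
  intro hc
  set g : ℝ → (Fin 3 → ℝ) := fun ε => ![Real.sqrt (1 - 2 * ε ^ 2), ε, ε] with hg
  have hg0 : g 0 = ![1, 0, 0] := by
    funext i
    fin_cases i <;> simp [hg]
  have hgc : ContinuousAt g 0 := by
    apply continuousAt_pi.2
    intro i
    fin_cases i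
    · simp only [hg, Matrix.cons_val_zero]
      exact (Real.continuous_sqrt.comp (by continuity)).continuousAt
    · simp only [hg, Matrix.cons_val_one, Matrix.head_cons]
      exact continuousAt_id
    · simp only [hg]
      exact continuousAt_id.congr (by filter_upwards with x; simp)
  have hcomp : Filter.Tendsto (Fpart ∘ g) (nhds 0) (nhds (3 / 2)) := by
    have hc' : ContinuousAt Fpart (g 0) := hg0 ▸ hc
    have h2 : Filter.Tendsto (Fpart ∘ g) (nhds 0) (nhds ((Fpart ∘ g) 0)) := hc'.comp hgc
    have h3 : (Fpart ∘ g) 0 = 3 / 2 := by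
      simp only [Function.comp_apply, hg0, Fpart_zero]
    rwa [h3] at h2
  have hwithin : Filter.Tendsto (Fpart ∘ g) (nhdsWithin 0 (Set.Ioi 0)) (nhds (3 / 2)) :=
    hcomp.mono_left nhdsWithin_le_nhds
  have heq : Filter.Tendsto (Fpart ∘ g) (nhdsWithin 0 (Set.Ioi 0)) (nhds 0) := by
    have : (Fpart ∘ g) =ᶠ[nhdsWithin 0 (Set.Ioi 0)] fun _ => 0 := by
      filter_upwards [self_mem_nhdsWithin] with x hx
      exact Fpart_eps _ _ (ne_of_gt hx)
    exact (tendsto_const_nhds.congr' this.symm)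
  have : (3 : ℝ) / 2 = 0 := tendsto_nhds_unique hwithin heq
  norm_num at this
end
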